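/- Let W be a finite Coxeter group with Coxeter arrangement A, B a W-stable arrangement disjoint from A, and C = A ∪ B. The map φ_B : Ch(C) → Ch(B) induces a bijection between the set of W-orbits of Ch(C) and the set of W-orbits of Ch(B). -/

import Mathlib

open Set

variable {E : Type*} [NormedAddCommGroup E] [InnerProductSpace ℝ E] [FiniteDimensional ℝ E]

/-- A linear hyperplane (through the origin). -/
def IsLinearHyperplane (H : Set E) : Prop :=
  ∃ f : E →ₗ[ℝ] ℝ, f ≠ 0 ∧ H = {x | f x = 0}

/-- An affine hyperplane. -/
def IsAffineHyperplane (H : Set E) : Prop :=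
  ∃ (f : E →ₗ[ℝ] ℝ) (c : ℝ), f ≠ 0 ∧ H = {x | f x = c}

/-- A hyperplane arrangement: a finite set of affine hyperplanes. -/
def IsArrangement (𝒜 : Set (Set E)) : Prop :=
  𝒜.Finite ∧ ∀ H ∈ 𝒜, IsAffineHyperplane H

/-- The chambers of an arrangement: the connected components of the complement of the
union of its hyperplanes. -/
def chambers (𝒜 : Set (Set E)) : Set (Set E) :=
  {c | ∃ x ∈ (⋃₀ 𝒜)ᶜ, c = connectedComponentIn (⋃₀ 𝒜)ᶜ x}

/-- An orthogonal transformation is a reflection if its fixed-point set is a hyperplane. -/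
def IsReflection (w : E ≃ₗᵢ[ℝ] E) : Prop :=
  IsLinearHyperplane {x | w x = x}

/-- The Coxeter arrangement of `W`: the set of all reflecting hyperplanes of `W`. -/
def coxeterArrangement (W : Subgroup (E ≃ₗᵢ[ℝ] E)) : Set (Set E) :=
  {H | ∃ w ∈ W, IsReflection w ∧ H = {x | w x = x}}

/-- `W` is a reflection (Coxeter) group: it is generated by its reflections. -/
def IsReflectionGroup (W : Subgroup (E ≃ₗᵢ[ℝ] E)) : Prop :=
  W = Subgroup.closure {w : E ≃ₗᵢ[ℝ] E | w ∈ W ∧ IsReflection w}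

/-- `ℬ` is stable under the natural action of `W`. -/
def WStable (W : Subgroup (E ≃ₗᵢ[ℝ] E)) (ℬ : Set (Set E)) : Prop :=
  ∀ w ∈ W, ∀ H ∈ ℬ, (⇑w) '' H ∈ ℬ

/-!
`φ_B` is `W`-equivariant because a chamber of `A ∪ B` lies in a unique chamber of `B`, and it is
onto because every chamber of `B` contains a point off the finitely many Coxeter hyperplanes.
For injectivity on orbits, let `c, c'` be chambers of `A ∪ B` inside one chamber `b` of `B`.
Join `x ∈ c` to a point `y ∈ c'` chosen so that the segment `[x, y]` meets the Coxeter
hyperplanes one at a time. The segment stays in the convex chamber `b`, so it only crosses walls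
of `A`. The reflection in the first wall it crosses, near the crossing point, carries `c` onto the
chamber just beyond that wall, and induction on the number of walls crossed gives `w ∈ W`
with `w c = c'`.
-/

set_option linter.unusedSectionVars false

open scoped RealInnerProductSpace

lemma IsPreconnected.mul_pos_of_ne_zero {X : Type*} [TopologicalSpace X] {S : Set X}
    (hS : IsPreconnected S) {g : X → ℝ} (hg : ContinuousOn g S) (hne : ∀ z ∈ S, g z ≠ 0)
    {p q : X} (hp : p ∈ S) (hq : q ∈ S) : 0 < g p * g q := by
  by_contra! hpq
  obtain ⟨z, hz, hz0⟩ : 0 ∈ g '' S := by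
    rcases mul_nonpos_iff.1 hpq with ⟨hgp, hgq⟩ | ⟨hgp, hgq⟩
    · exact hS.intermediate_value hq hp hg ⟨hgq, hgp⟩
    · exact hS.intermediate_value hp hq hg ⟨hgp, hgq⟩
  exact hne z hz hz0

lemma LinearMap.apply_ne_of_mem_segment {V : Type*} [AddCommGroup V] [Module ℝ V]
    (f : V →ₗ[ℝ] ℝ) {r : ℝ} {y z v : V} (hyz : 0 < (f y - r) * (f z - r))
    (hv : v ∈ segment ℝ y z) : f v ≠ r := by
  intro hr
  have hmem : f v ∈ segment ℝ (f y) (f z) := by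
    simpa using (image_segment ℝ f.toAffineMap y z).subset (mem_image_of_mem _ hv)
  rw [hr, segment_eq_uIcc, mem_uIcc] at hmem
  rcases hmem with ⟨h1, h2⟩ | ⟨h1, h2⟩ <;> nlinarith

lemma LinearMap.smul_sub_smul_ne_zero {K V : Type*} [Field K] [AddCommGroup V] [Module K V]
    {f g : V →ₗ[K] K} {x : V} (hfx : f x ≠ 0) (hg : g ≠ 0)
    (hker : {v | f v = 0} ≠ {v | g v = 0}) : f x • g - g x • f ≠ 0 := by
  intro hL
  have key : ∀ v, f x * g v = g x * f v := fun v => by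
    simpa [sub_eq_zero] using LinearMap.congr_fun hL v
  have hgx : g x ≠ 0 := fun h0 => hg (LinearMap.ext fun v => by simpa [h0, hfx] using key v)
  refine hker (Set.ext fun v => ⟨fun (hv : f v = 0) => ?_, fun (hv : g v = 0) => ?_⟩)
  · simpa [hv, hfx] using key v
  · simpa [hv, hgx] using (key v).symm

lemma LinearMap.smul_sub_smul_apply_eq_zero_of_mem_segment {V : Type*} [AddCommGroup V]
    [Module ℝ V] {f g : V →ₗ[ℝ] ℝ} {x y z : V} (hfx : f x ≠ 0) (hz : z ∈ segment ℝ x y)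
    (hfz : f z = 0) (hgz : g z = 0) : (f x • g - g x • f) y = 0 := by
  rw [segment_eq_image'] at hz
  obtain ⟨t, -, rfl⟩ := hz
  simp only [map_add, map_smul, map_sub, smul_eq_mul] at hfz hgz
  have ht : t ≠ 0 := by rintro rfl; simp_all
  have : t * (f x * g y - g x * f y) = 0 := by linear_combination f x * hgz - g x * hfz
  simpa [ht, sub_eq_zero] using this

lemma exists_first_mem_of_isClosed {V : Type*} [TopologicalSpace V] {S : Set V}
    (hS : IsClosed S) {γ : ℝ → V} (hγ : Continuous γ) (h0 : γ 0 ∉ S) (h1 : γ 1 ∉ S)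
    {s : ℝ} (hs : s ∈ Icc 0 1) (hγs : γ s ∈ S) :
    ∃ t ∈ Ioo (0 : ℝ) 1, γ t ∈ S ∧ ∀ t' ∈ Ico 0 t, γ t' ∉ S := by
  obtain ⟨t, ⟨ht, htS⟩, hmin⟩ :=
    (isCompact_Icc.inter_right (hS.preimage hγ)).exists_isLeast ⟨s, hs, hγs⟩
  refine ⟨t, ⟨ht.1.lt_of_ne ?_, ht.2.lt_of_ne ?_⟩, htS, fun t' ht' ht'S =>
    (hmin ⟨⟨ht'.1, ht'.2.le.trans ht.2⟩, ht'S⟩).not_gt ht'.2⟩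
  · rintro rfl
    exact h0 htS
  · rintro rfl
    exact h1 htS

lemma segment_lineMap_subset {V : Type*} [AddCommGroup V] [Module ℝ V] {x y : V} {s t : ℝ}
    (hst : s ≤ t) {T : Set V} (h : ∀ r ∈ Icc s t, AffineMap.lineMap x y r ∈ T) :
    segment ℝ (AffineMap.lineMap x y s) (AffineMap.lineMap x y t) ⊆ T := by
  rw [← image_segment, segment_eq_Icc hst]
  exact image_subset_iff.2 h

lemma LinearMap.apply_lineMap_eq_mul {V : Type*} [AddCommGroup V] [Module ℝ V] (f : V →ₗ[ℝ] ℝ)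
    {x y : V} {t₀ : ℝ} (h : f (AffineMap.lineMap x y t₀) = 0) (t : ℝ) :
    f (AffineMap.lineMap x y t) = (t - t₀) * (f y - f x) := by
  simp only [AffineMap.lineMap_apply_module', map_add, map_smul, map_sub, smul_eq_mul] at h ⊢
  linear_combination h

lemma exists_mem_Ioo_of_mem_nhds {U : Set ℝ} {a b t₀ : ℝ} (hU : U ∈ nhds t₀)
    (ht₀ : t₀ ∈ Ioo a b) : (U ∩ Ioo a t₀).Nonempty ∧ (U ∩ Ioo t₀ b).Nonempty :=
  ⟨Filter.nonempty_of_mem (Filter.inter_mem (nhdsWithin_le_nhds hU : U ∈ nhdsWithin t₀ (Iio t₀))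
      (Ioo_mem_nhdsLT ht₀.1)),
    Filter.nonempty_of_mem (Filter.inter_mem (nhdsWithin_le_nhds hU : U ∈ nhdsWithin t₀ (Ioi t₀))
      (Ioo_mem_nhdsGT ht₀.2))⟩

lemma image_image_eq_mul_image (a b : E ≃ₗᵢ[ℝ] E) (s : Set E) :
    ⇑a '' (⇑b '' s) = ⇑(a * b) '' s := by
  rw [LinearIsometryEquiv.coe_mul, image_comp]

section Chambers

variable {𝒜 ℬ : Set (Set E)}

def chamberOf (𝒜 : Set (Set E)) (x : E) : Set E :=
  connectedComponentIn (⋃₀ 𝒜)ᶜ x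

lemma chamberOf_mem_chambers {x : E} (hx : x ∉ ⋃₀ 𝒜) : chamberOf 𝒜 x ∈ chambers 𝒜 :=
  ⟨x, hx, rfl⟩

lemma mem_chamberOf {x : E} (hx : x ∉ ⋃₀ 𝒜) : x ∈ chamberOf 𝒜 x :=
  mem_connectedComponentIn hx

lemma chamberOf_subset_compl (x : E) : chamberOf 𝒜 x ⊆ (⋃₀ 𝒜)ᶜ :=
  connectedComponentIn_subset _ _

lemma eq_chamberOf_of_mem {c : Set E} (hc : c ∈ chambers 𝒜) {z : E} (hz : z ∈ c) :
    c = chamberOf 𝒜 z := by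
  obtain ⟨x, -, rfl⟩ := hc
  exact connectedComponentIn_eq hz

lemma nonempty_of_mem_chambers {c : Set E} (hc : c ∈ chambers 𝒜) : c.Nonempty := by
  obtain ⟨x, hx, rfl⟩ := hc
  exact ⟨x, mem_chamberOf hx⟩

lemma eq_of_mem_chambers_of_mem {c c' : Set E} (hc : c ∈ chambers 𝒜) (hc' : c' ∈ chambers 𝒜)
    {z : E} (hz : z ∈ c) (hz' : z ∈ c') : c = c' :=
  (eq_chamberOf_of_mem hc hz).trans (eq_chamberOf_of_mem hc' hz').symm

lemma subset_compl_of_mem_chambers {c : Set E} (hc : c ∈ chambers 𝒜) : c ⊆ (⋃₀ 𝒜)ᶜ := by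
  obtain ⟨x, -, rfl⟩ := hc
  exact chamberOf_subset_compl x

lemma chamberOf_eq_of_segment_subset {x y : E} (h : segment ℝ x y ⊆ (⋃₀ 𝒜)ᶜ) :
    chamberOf 𝒜 y = chamberOf 𝒜 x :=
  (connectedComponentIn_eq ((convex_segment x y).isPreconnected.subset_connectedComponentIn
    (left_mem_segment ℝ x y) h (right_mem_segment ℝ x y))).symm

lemma chamberOf_mono (h : ℬ ⊆ 𝒜) (x : E) : chamberOf 𝒜 x ⊆ chamberOf ℬ x :=
  connectedComponentIn_mono x (compl_subset_compl.2 (sUnion_subset_sUnion h))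

lemma IsAffineHyperplane.isClosed {H : Set E} (hH : IsAffineHyperplane H) : IsClosed H := by
  obtain ⟨f, r, -, rfl⟩ := hH
  exact isClosed_eq f.continuous_of_finiteDimensional continuous_const

lemma IsAffineHyperplane.interior_eq_empty {H : Set E} (hH : IsAffineHyperplane H) :
    interior H = ∅ := by
  obtain ⟨f, r, hf, rfl⟩ := hH
  have hopen := f.isOpenMap_of_finiteDimensional (f.surjective_or_eq_zero.resolve_right hf)
  have himage : ⇑f '' {v | f v = r} ⊆ {r} := by
    rintro _ ⟨v, hv, rfl⟩
    exact hv
  exact image_eq_empty.1 (subset_empty_iff.1 ((hopen.image_interior_subset _).trans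
    ((interior_mono himage).trans (interior_singleton r).subset)))

lemma IsAffineHyperplane.disjoint_segment {H S : Set E} (hH : IsAffineHyperplane H)
    (hS : IsPreconnected S) (hSH : Disjoint S H) {y z : E} (hy : y ∈ S) (hz : z ∈ S) :
    Disjoint (segment ℝ y z) H := by
  obtain ⟨f, r, -, rfl⟩ := hH
  have hside := hS.mul_pos_of_ne_zero (g := fun v => f v - r)
    (f.continuous_of_finiteDimensional.sub continuous_const).continuousOn
    (fun v hv hv0 => hSH.notMem_of_mem_left hv (sub_eq_zero.1 hv0)) hy hz
  exact disjoint_left.2 fun v hv => f.apply_ne_of_mem_segment hside hv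

lemma IsArrangement.isClosed_sUnion (h : IsArrangement 𝒜) : IsClosed (⋃₀ 𝒜) := by
  rw [sUnion_eq_biUnion]
  exact h.1.isClosed_biUnion fun H hH => (h.2 H hH).isClosed

lemma IsArrangement.union (h𝒜 : IsArrangement 𝒜) (hℬ : IsArrangement ℬ) :
    IsArrangement (𝒜 ∪ ℬ) :=
  ⟨h𝒜.1.union hℬ.1, fun H hH => hH.elim (h𝒜.2 H) (hℬ.2 H)⟩

lemma IsArrangement.exists_mem_notMem_sUnion (h : IsArrangement 𝒜) {U : Set E}
    (hU : IsOpen U) (hne : U.Nonempty) : ∃ x ∈ U, x ∉ ⋃₀ 𝒜 := by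
  by_contra! hsub
  refine not_isMeagre_of_isOpen hU hne (IsMeagre.mono hsub ?_)
  rw [sUnion_eq_biUnion]
  exact isMeagre_biUnion h.1.countable fun H hH =>
    ((h.2 H hH).isClosed.isNowhereDense_iff.2 (h.2 H hH).interior_eq_empty).isMeagre

lemma IsArrangement.isOpen_of_mem_chambers (h : IsArrangement 𝒜) {c : Set E}
    (hc : c ∈ chambers 𝒜) : IsOpen c := by
  obtain ⟨x, -, rfl⟩ := hc
  exact h.isClosed_sUnion.isOpen_compl.connectedComponentIn

lemma IsArrangement.convex_of_mem_chambers (h : IsArrangement 𝒜) {c : Set E}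
    (hc : c ∈ chambers 𝒜) : Convex ℝ c := by
  obtain ⟨x, hx, rfl⟩ := hc
  refine convex_iff_segment_subset.2 fun y hy z hz => ?_
  have hseg : segment ℝ y z ⊆ (⋃₀ 𝒜)ᶜ := fun v hv ⟨H, hH, hvH⟩ => by
    have hxH : Disjoint (chamberOf 𝒜 x) H :=
      disjoint_left.2 fun u hu huH => chamberOf_subset_compl x hu ⟨H, hH, huH⟩
    exact ((h.2 H hH).disjoint_segment isPreconnected_connectedComponentIn hxH hy hz
      ).notMem_of_mem_left hv hvH
  rw [connectedComponentIn_eq hy]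
  exact (convex_segment y z).isPreconnected.subset_connectedComponentIn
    (left_mem_segment ℝ y z) hseg

lemma exists_mem_chambers_union_subset (h𝒜 : IsArrangement 𝒜) (hℬ : IsArrangement ℬ)
    {b : Set E} (hb : b ∈ chambers ℬ) : ∃ c ∈ chambers (𝒜 ∪ ℬ), c ⊆ b := by
  obtain ⟨x, hxb, hx𝒜⟩ :=
    h𝒜.exists_mem_notMem_sUnion (hℬ.isOpen_of_mem_chambers hb) (nonempty_of_mem_chambers hb)
  have hx : x ∉ ⋃₀ (𝒜 ∪ ℬ) := by
    rw [sUnion_union]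
    exact fun hx => hx.elim hx𝒜 (subset_compl_of_mem_chambers hb hxb)
  refine ⟨chamberOf (𝒜 ∪ ℬ) x, chamberOf_mem_chambers hx, ?_⟩
  rw [eq_chamberOf_of_mem hb hxb]
  exact chamberOf_mono subset_union_right x

end Chambers

section Stable

variable {W : Subgroup (E ≃ₗᵢ[ℝ] E)} {𝒜 ℬ : Set (Set E)} {w : E ≃ₗᵢ[ℝ] E}

lemma WStable.union (h𝒜 : WStable W 𝒜) (hℬ : WStable W ℬ) : WStable W (𝒜 ∪ ℬ) :=
  fun w hw H hH => hH.imp (h𝒜 w hw H) (hℬ w hw H)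

lemma WStable.image_sUnion_subset (h : WStable W 𝒜) (hw : w ∈ W) : ⇑w '' ⋃₀ 𝒜 ⊆ ⋃₀ 𝒜 := by
  rw [image_sUnion]
  exact sUnion_subset fun _ ⟨H, hH, hHw⟩ => hHw ▸ subset_sUnion_of_mem (h w hw H hH)

lemma WStable.image_compl_sUnion (h : WStable W 𝒜) (hw : w ∈ W) :
    ⇑w '' (⋃₀ 𝒜)ᶜ = (⋃₀ 𝒜)ᶜ := by
  rw [image_compl_eq w.bijective]
  refine congrArg _ ((h.image_sUnion_subset hw).antisymm fun v hv => ⟨w⁻¹ v, ?_, ?_⟩)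
  · exact h.image_sUnion_subset (inv_mem hw) (mem_image_of_mem _ hv)
  · simp [LinearIsometryEquiv.coe_inv]

lemma WStable.apply_notMem_sUnion (h : WStable W 𝒜) (hw : w ∈ W) {x : E} (hx : x ∉ ⋃₀ 𝒜) :
    w x ∉ ⋃₀ 𝒜 :=
  (h.image_compl_sUnion hw).subset (mem_image_of_mem _ hx)

lemma WStable.image_chamberOf (h : WStable W 𝒜) (hw : w ∈ W) {x : E} (hx : x ∉ ⋃₀ 𝒜) :
    ⇑w '' chamberOf 𝒜 x = chamberOf 𝒜 (w x) := by
  have := w.toHomeomorph.image_connectedComponentIn (s := (⋃₀ 𝒜)ᶜ) hx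
  rwa [LinearIsometryEquiv.coe_toHomeomorph, h.image_compl_sUnion hw] at this

lemma WStable.image_mem_chambers (h : WStable W 𝒜) (hw : w ∈ W) {c : Set E}
    (hc : c ∈ chambers 𝒜) : ⇑w '' c ∈ chambers 𝒜 := by
  obtain ⟨x, hx, rfl⟩ := hc
  exact h.image_chamberOf hw hx ▸ chamberOf_mem_chambers (h.apply_notMem_sUnion hw hx)

lemma IsLinearHyperplane.image {H : Set E} (hH : IsLinearHyperplane H) (w : E ≃ₗᵢ[ℝ] E) :
    IsLinearHyperplane (⇑w '' H) := by
  obtain ⟨f, hf, rfl⟩ := hH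
  refine ⟨f.comp w.symm.toLinearEquiv.toLinearMap, fun h0 => hf (LinearMap.ext fun v => ?_), ?_⟩
  · simpa using LinearMap.congr_fun h0 (w v)
  · ext v
    simp [w.image_eq_preimage_symm]

lemma image_setOf_apply_eq_self (w u : E ≃ₗᵢ[ℝ] E) :
    ⇑w '' {x | u x = x} = {x | (w * u * w⁻¹) x = x} := by
  ext v
  simp [w.image_eq_preimage_symm, LinearIsometryEquiv.coe_inv, w.eq_symm_apply]

lemma isArrangement_coxeterArrangement (hWfin : (W : Set (E ≃ₗᵢ[ℝ] E)).Finite) :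
    IsArrangement (coxeterArrangement W) := by
  refine ⟨(hWfin.image fun w => {x | w x = x}).subset ?_, ?_⟩
  · rintro H ⟨w, hw, -, rfl⟩
    exact ⟨w, hw, rfl⟩
  · rintro H ⟨w, -, ⟨f, hf, hfix⟩, rfl⟩
    exact ⟨f, 0, hf, hfix⟩

lemma wStable_coxeterArrangement (W : Subgroup (E ≃ₗᵢ[ℝ] E)) :
    WStable W (coxeterArrangement W) := by
  rintro w hw H ⟨u, hu, hr, rfl⟩
  rw [image_setOf_apply_eq_self]
  refine ⟨w * u * w⁻¹, mul_mem (mul_mem hw hu) (inv_mem hw), ?_, rfl⟩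
  rw [IsReflection, ← image_setOf_apply_eq_self]
  exact hr.image w

lemma LinearIsometryEquiv.apply_map_eq_neg_of_fixed_eq_ker {u : E ≃ₗᵢ[ℝ] E} {f : E →ₗ[ℝ] ℝ}
    (hf : f ≠ 0) (hfix : {x | u x = x} = {x | f x = 0}) (y : E) : f (u y) = -f y := by
  obtain ⟨n, hn⟩ : ∃ n : E, ∀ v, f v = ⟪n, v⟫ :=
    ⟨(InnerProductSpace.toDual ℝ E).symm (LinearMap.toContinuousLinearMap f), fun v => by
      simp [InnerProductSpace.toDual_symm_apply]⟩
  have hfixed : ∀ k, ⟪n, k⟫ = 0 → u k = k := fun k hk => by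
    have hk' : k ∈ {x | f x = 0} := by simp [hn, hk]
    rwa [← hfix] at hk'
  have hnn : ⟪n, n⟫ ≠ 0 := fun h0 =>
    hf (LinearMap.ext fun v => by simp [hn, inner_self_eq_zero.1 h0])
  set c := ⟪n, u n⟫ / ⟪n, n⟫
  -- `u n` is orthogonal to `n⊥ = ker f`, hence a multiple of `n`
  have hun : u n = c • n := by
    have hr : ⟪n, u n - c • n⟫ = 0 := by
      rw [inner_sub_right, real_inner_smul_right, div_mul_cancel₀ _ hnn, sub_self]
    have hur : ⟪u n, u n - c • n⟫ = 0 := by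
      have := u.inner_map_map n (u n - c • n)
      rwa [hfixed _ hr, hr] at this
    have : ⟪u n - c • n, u n - c • n⟫ = 0 := by
      rw [inner_sub_left, real_inner_smul_left, hur, hr, mul_zero, sub_zero]
    exact sub_eq_zero.1 (inner_self_eq_zero.1 this)
  have hc : c = -1 := by
    have hsq : (c - 1) * (c + 1) * ⟪n, n⟫ = 0 := by
      have := u.inner_map_map n n
      rw [hun, real_inner_smul_left, real_inner_smul_right] at this
      linear_combination this
    have hc1 : c ≠ 1 := by
      intro h1
      have hnfix : n ∈ {x | u x = x} := by simpa [h1] using hun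
      rw [hfix] at hnfix
      exact hnn (by simpa [hn] using hnfix)
    rcases mul_eq_zero.1 hsq with h | h
    · rcases mul_eq_zero.1 h with h | h
      · exact absurd (sub_eq_zero.1 h) hc1
      · linarith
    · exact absurd h hnn
  rw [hn, hn, ← u.inner_map_map n y, hun, hc, neg_one_smul, inner_neg_left, neg_neg]

lemma exists_reflection_of_mem_coxeterArrangement {H : Set E}
    (hH : H ∈ coxeterArrangement W) : ∃ u ∈ W, ∃ f : E →ₗ[ℝ] ℝ,
      H = {x | f x = 0} ∧ (∀ x ∈ H, u x = x) ∧ ∀ y, f (u y) = -f y := by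
  obtain ⟨u, hu, ⟨f, hf, hfix⟩, rfl⟩ := hH
  exact ⟨u, hu, f, hfix, fun x hx => hx, u.apply_map_eq_neg_of_fixed_eq_ker hf hfix⟩

end Stable

section Orbits

variable {W : Subgroup (E ≃ₗᵢ[ℝ] E)}

def imageOrbit (W : Subgroup (E ≃ₗᵢ[ℝ] E)) (s : Set E) : Set (Set E) :=
  {t | ∃ w ∈ W, t = ⇑w '' s}

lemma mem_imageOrbit_self (s : Set E) : s ∈ imageOrbit W s :=
  ⟨1, one_mem W, by rw [LinearIsometryEquiv.coe_one, image_id]⟩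

lemma imageOrbit_eq_of_mem {s t : Set E} (h : t ∈ imageOrbit W s) :
    imageOrbit W t = imageOrbit W s := by
  obtain ⟨v, hv, rfl⟩ := h
  ext r
  constructor
  · rintro ⟨w, hw, rfl⟩
    exact ⟨w * v, mul_mem hw hv, image_image_eq_mul_image w v s⟩
  · rintro ⟨w, hw, rfl⟩
    refine ⟨w * v⁻¹, mul_mem hw (inv_mem hv), ?_⟩
    rw [image_image_eq_mul_image, inv_mul_cancel_right]

lemma image_imageOrbit {φ : Set E → Set E} {s : Set E}
    (hφ : ∀ w ∈ W, φ (⇑w '' s) = ⇑w '' φ s) : φ '' imageOrbit W s = imageOrbit W (φ s) := by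
  ext t
  constructor
  · rintro ⟨_, ⟨w, hw, rfl⟩, rfl⟩
    exact ⟨w, hw, hφ w hw⟩
  · rintro ⟨w, hw, rfl⟩
    exact ⟨_, ⟨w, hw, rfl⟩, hφ w hw⟩

lemma bijOn_image_imageOrbit {X Y : Set (Set E)} {φ : Set E → Set E}
    (hX : ∀ w ∈ W, ∀ c ∈ X, ⇑w '' c ∈ X) (hmaps : MapsTo φ X Y)
    (hequiv : ∀ c ∈ X, ∀ w ∈ W, φ (⇑w '' c) = ⇑w '' φ c) (hsurj : SurjOn φ X Y)
    (hfib : ∀ c ∈ X, ∀ c' ∈ X, φ c = φ c' → c' ∈ imageOrbit W c) :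
    BijOn (fun O => φ '' O) {O | ∃ c ∈ X, O = imageOrbit W c}
      {O | ∃ b ∈ Y, O = imageOrbit W b} := by
  refine ⟨?_, ?_, ?_⟩
  · rintro _ ⟨c, hc, rfl⟩
    exact ⟨φ c, hmaps hc, image_imageOrbit (hequiv c hc)⟩
  · rintro _ ⟨c₁, hc₁, rfl⟩ _ ⟨c₂, hc₂, rfl⟩ h
    simp only [image_imageOrbit (hequiv _ hc₁), image_imageOrbit (hequiv _ hc₂)] at h
    obtain ⟨w, hw, hw₂⟩ : φ c₂ ∈ imageOrbit W (φ c₁) := h ▸ mem_imageOrbit_self _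
    rw [← hequiv c₁ hc₁ w hw] at hw₂
    rw [imageOrbit_eq_of_mem (hfib _ (hX w hw c₁ hc₁) c₂ hc₂ hw₂.symm),
      imageOrbit_eq_of_mem ⟨w, hw, rfl⟩]
  · rintro _ ⟨b, hb, rfl⟩
    obtain ⟨c, hc, rfl⟩ := hsurj hb
    exact ⟨_, ⟨c, hc, rfl⟩, image_imageOrbit (hequiv c hc)⟩

end Orbits

section Crossing

variable {W : Subgroup (E ≃ₗᵢ[ℝ] E)} {𝒜 𝒞 : Set (Set E)}

def IsGenericSegment (𝒜 : Set (Set E)) (x y : E) : Prop :=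
  ∀ z ∈ segment ℝ x y, ∀ H ∈ 𝒜, ∀ H' ∈ 𝒜, z ∈ H → z ∈ H' → H = H'

def crossedBy (𝒜 : Set (Set E)) (x y : E) : Set (Set E) :=
  {H ∈ 𝒜 | (segment ℝ x y ∩ H).Nonempty}

lemma IsGenericSegment.mono {x y x' y' : E} (h : IsGenericSegment 𝒜 x y)
    (hsub : segment ℝ x' y' ⊆ segment ℝ x y) : IsGenericSegment 𝒜 x' y' :=
  fun z hz => h z (hsub hz)

lemma crossedBy_mono {x y x' y' : E} (hsub : segment ℝ x' y' ⊆ segment ℝ x y) :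
    crossedBy 𝒜 x' y' ⊆ crossedBy 𝒜 x y :=
  fun _ ⟨hH, z, hz, hzH⟩ => ⟨hH, z, hsub hz, hzH⟩

lemma chamberOf_lineMap_eq {x y : E} {s : ℝ} (hs : 0 ≤ s)
    (h : ∀ r ∈ Icc 0 s, AffineMap.lineMap x y r ∉ ⋃₀ 𝒞) :
    chamberOf 𝒞 (AffineMap.lineMap x y s) = chamberOf 𝒞 x := by
  conv_rhs => rw [← AffineMap.lineMap_apply_zero (k := ℝ) x y]
  exact chamberOf_eq_of_segment_subset (segment_lineMap_subset hs h)

lemma crossedBy_lineMap_ssubset {H₀ : Set E} (hH₀𝒜 : H₀ ∈ 𝒜) {f : E →ₗ[ℝ] ℝ}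
    (hH₀ : H₀ = {v | f v = 0}) {x y : E} (hx : x ∉ H₀) {t₀ t : ℝ} (ht₀ : t₀ ∈ Icc 0 1)
    (hpH₀ : AffineMap.lineMap x y t₀ ∈ H₀) (ht : t ∈ Ioc t₀ 1) :
    crossedBy 𝒜 (AffineMap.lineMap x y t) y ⊂ crossedBy 𝒜 x y := by
  rw [hH₀] at hx hpH₀
  have hfγ := f.apply_lineMap_eq_mul hpH₀
  have hfxy : f y - f x ≠ 0 := fun h0 => hx (by simpa [h0] using hfγ 0)
  have hsub : segment ℝ (AffineMap.lineMap x y t) y ⊆ segment ℝ x y :=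
    (convex_segment x y).segment_subset (lineMap_mem_segment ℝ x y ⟨ht₀.1.trans ht.1.le, ht.2⟩)
      (right_mem_segment ℝ x y)
  refine (crossedBy_mono hsub).ssubset_of_mem_notMem
    ⟨hH₀𝒜, _, lineMap_mem_segment ℝ x y ht₀, hH₀ ▸ hpH₀⟩ ?_
  rintro ⟨-, v, hv, hvH₀⟩
  have hv' : v ∈ segment ℝ (AffineMap.lineMap x y t) (AffineMap.lineMap x y (1 : ℝ)) := by
    rwa [AffineMap.lineMap_apply_one]
  rw [hH₀] at hvH₀
  refine segment_lineMap_subset ht.2 (T := {v | f v ≠ 0}) (fun r hr => ?_) hv' hvH₀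
  show f _ ≠ 0
  rw [hfγ]
  exact mul_ne_zero (by linarith [ht.1, hr.1]) hfxy

lemma exists_isGenericSegment (hfin : 𝒜.Finite) (hlin : ∀ H ∈ 𝒜, IsLinearHyperplane H)
    {x : E} (hx : x ∉ ⋃₀ 𝒜) {U : Set E} (hU : IsOpen U) (hne : U.Nonempty) :
    ∃ y ∈ U, IsGenericSegment 𝒜 x y := by
  choose! f hf hHf using hlin
  have hfx : ∀ H ∈ 𝒜, f H x ≠ 0 := fun H hH h0 => hx ⟨H, hH, by rw [hHf H hH]; exact h0⟩
  -- `y` must avoid the hyperplane spanned by `x` and `H ∩ H'`, for all `H ≠ H'`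
  set 𝒩 : Set (Set E) :=
    (fun p : Set E × Set E => {v | (f p.1 x • f p.2 - f p.2 x • f p.1) v = 0}) ''
      {p | p.1 ∈ 𝒜 ∧ p.2 ∈ 𝒜 ∧ p.1 ≠ p.2}
  have h𝒩 : IsArrangement 𝒩 := by
    refine ⟨((hfin.prod hfin).subset fun p hp => ⟨hp.1, hp.2.1⟩).image _, ?_⟩
    rintro _ ⟨⟨H, H'⟩, ⟨hH, hH', hHH'⟩, rfl⟩
    refine ⟨_, 0, LinearMap.smul_sub_smul_ne_zero (hfx H hH) (hf H' hH') ?_, rfl⟩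
    rwa [← hHf H hH, ← hHf H' hH']
  obtain ⟨y, hyU, hy⟩ := h𝒩.exists_mem_notMem_sUnion hU hne
  refine ⟨y, hyU, fun z hz H hH H' hH' hzH hzH' => by_contra fun hHH' => hy ?_⟩
  rw [hHf H hH] at hzH
  rw [hHf H' hH'] at hzH'
  exact ⟨_, ⟨(H, H'), ⟨hH, hH', hHH'⟩, rfl⟩,
    LinearMap.smul_sub_smul_apply_eq_zero_of_mem_segment (hfx H hH) hz hzH hzH'⟩

lemma IsArrangement.exists_ball_disjoint (h : IsArrangement 𝒞) {H₀ : Set E} {p : E}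
    (hp : ∀ H ∈ 𝒞, H ≠ H₀ → p ∉ H) :
    ∃ ε > 0, ∀ H ∈ 𝒞, H ≠ H₀ → Disjoint (Metric.ball p ε) H := by
  have hcl : IsClosed (⋃₀ (𝒞 \ {H₀})) :=
    IsArrangement.isClosed_sUnion ⟨h.1.sdiff, fun H hH => h.2 H hH.1⟩
  obtain ⟨ε, hε, hball⟩ :=
    Metric.isOpen_iff.1 hcl.isOpen_compl p fun ⟨H, hH, hpH⟩ => hp H hH.1 hH.2 hpH
  exact ⟨ε, hε, fun H hH hne => disjoint_left.2 fun v hv hvH => hball hv ⟨H, ⟨hH, hne⟩, hvH⟩⟩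

lemma notMem_sUnion_of_mem_ball {H₀ : Set E} {p : E} {ε : ℝ}
    (hball : ∀ H ∈ 𝒞, H ≠ H₀ → Disjoint (Metric.ball p ε) H) {f : E →ₗ[ℝ] ℝ}
    (hH₀ : H₀ = {v | f v = 0}) {v : E} (hv : v ∈ Metric.ball p ε) (hfv : f v ≠ 0) :
    v ∉ ⋃₀ 𝒞 := by
  rintro ⟨H, hH, hvH⟩
  by_cases hHH₀ : H = H₀
  · subst hHH₀ hH₀
    exact hfv hvH
  · exact (hball H hH hHH₀).notMem_of_mem_left hv hvH

lemma WStable.chamberOf_eq_image_of_mem_ball (h𝒞W : WStable W 𝒞) {u : E ≃ₗᵢ[ℝ] E}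
    (hu : u ∈ W) {f : E →ₗ[ℝ] ℝ} (hfu : ∀ v, f (u v) = -f v) {H₀ : Set E}
    (hH₀ : H₀ = {v | f v = 0}) {p : E} (hup : u p = p) {ε : ℝ}
    (hball : ∀ H ∈ 𝒞, H ≠ H₀ → Disjoint (Metric.ball p ε) H) {q q' : E}
    (hq : q ∈ Metric.ball p ε) (hq' : q' ∈ Metric.ball p ε) (hqq' : f q * f q' < 0) :
    chamberOf 𝒞 q' = ⇑u '' chamberOf 𝒞 q := by
  have huq : u q ∈ Metric.ball p ε := by
    rw [Metric.mem_ball, ← hup, u.dist_map]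
    exact hq
  have hside : 0 < (f (u q) - 0) * (f q' - 0) := by
    rw [hfu]
    linarith
  have hseg : segment ℝ (u q) q' ⊆ (⋃₀ 𝒞)ᶜ := fun v hv =>
    notMem_sUnion_of_mem_ball hball hH₀ ((convex_ball p ε).segment_subset huq hq' hv)
      (f.apply_ne_of_mem_segment hside hv)
  rw [h𝒞W.image_chamberOf hu
    (notMem_sUnion_of_mem_ball hball hH₀ hq (left_ne_zero_of_mul hqq'.ne)),
    chamberOf_eq_of_segment_subset hseg]

end Crossing

section Walls

variable {W : Subgroup (E ≃ₗᵢ[ℝ] E)} {ℬ : Set (Set E)}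

lemma exists_chamberOf_eq_image_of_first_crossing (hWfin : (W : Set (E ≃ₗᵢ[ℝ] E)).Finite)
    (hB : IsArrangement ℬ) (hBW : WStable W ℬ) {x y : E}
    (hxyB : Disjoint (segment ℝ x y) (⋃₀ ℬ)) (hgen : IsGenericSegment (coxeterArrangement W) x y)
    {t₀ : ℝ} (ht₀ : t₀ ∈ Ioo 0 1) {H₀ : Set E} (hH₀A : H₀ ∈ coxeterArrangement W)
    (hpH₀ : AffineMap.lineMap x y t₀ ∈ H₀)
    (hbefore : ∀ t ∈ Ico 0 t₀, AffineMap.lineMap x y t ∉ ⋃₀ coxeterArrangement W) :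
    ∃ x' ∈ segment ℝ x y, x' ∉ ⋃₀ coxeterArrangement W ∧
      crossedBy (coxeterArrangement W) x' y ⊂ crossedBy (coxeterArrangement W) x y ∧
      ∃ u ∈ W, chamberOf (coxeterArrangement W ∪ ℬ) x' =
        ⇑u '' chamberOf (coxeterArrangement W ∪ ℬ) x := by
  set γ := AffineMap.lineMap (k := ℝ) x y
  have hγ0 : γ 0 = x := AffineMap.lineMap_apply_zero x y
  have hγseg : ∀ t ∈ Icc (0 : ℝ) 1, γ t ∈ segment ℝ x y := fun t ht => lineMap_mem_segment ℝ x y ht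
  obtain ⟨u, hu, f, hH₀, hufix, hfu⟩ := exists_reflection_of_mem_coxeterArrangement hH₀A
  have hp : γ t₀ ∈ segment ℝ x y := hγseg t₀ (Ioo_subset_Icc_self ht₀)
  obtain ⟨ε, hε, hball⟩ := ((isArrangement_coxeterArrangement hWfin).union hB).exists_ball_disjoint
    (H₀ := H₀) fun H hH hne hpH => hH.elim (fun hHA => hne (hgen _ hp H hHA H₀ hH₀A hpH hpH₀))
      (fun hHB => hxyB.notMem_of_mem_left hp ⟨H, hHB, hpH⟩)
  have hfγ := f.apply_lineMap_eq_mul (by rw [hH₀] at hpH₀; exact hpH₀)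
  have hfxy : f y - f x ≠ 0 := fun h0 => hbefore 0 ⟨le_rfl, ht₀.1⟩ ⟨H₀, hH₀A, by
    rw [hH₀]
    show f (γ 0) = 0
    rw [hfγ, h0, mul_zero]⟩
  -- `γ t₁` and `γ t₂` lie on either side of `H₀`, in the ball meeting no other hyperplane
  obtain ⟨⟨t₁, ht₁ball, ht₁⟩, ⟨t₂, ht₂ball, ht₂⟩⟩ := exists_mem_Ioo_of_mem_nhds
    (AffineMap.lineMap_continuous.continuousAt.preimage_mem_nhds
      (Metric.ball_mem_nhds (γ t₀) hε)) ht₀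
  have hfγ₂ : f (γ t₂) ≠ 0 := by rw [hfγ]; exact mul_ne_zero (by linarith [ht₂.1]) hfxy
  have hx' : γ t₂ ∉ ⋃₀ (coxeterArrangement W ∪ ℬ) :=
    notMem_sUnion_of_mem_ball hball hH₀ ht₂ball hfγ₂
  refine ⟨γ t₂, hγseg t₂ ⟨ht₀.1.le.trans ht₂.1.le, ht₂.2.le⟩,
    fun h => hx' (sUnion_mono subset_union_left h),
    crossedBy_lineMap_ssubset hH₀A hH₀ (fun hx => hbefore 0 ⟨le_rfl, ht₀.1⟩ ⟨H₀, hH₀A, hγ0 ▸ hx⟩)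
      (Ioo_subset_Icc_self ht₀) hpH₀ ⟨ht₂.1, ht₂.2.le⟩, u, hu, ?_⟩
  have hx₁ : chamberOf (coxeterArrangement W ∪ ℬ) (γ t₁) =
      chamberOf (coxeterArrangement W ∪ ℬ) x := by
    refine chamberOf_lineMap_eq ht₁.1.le fun r hr => ?_
    rw [sUnion_union, mem_union, not_or]
    exact ⟨hbefore r ⟨hr.1, hr.2.trans_lt ht₁.2⟩, hxyB.notMem_of_mem_left
      (hγseg r ⟨hr.1, by linarith [hr.2, ht₁.2, ht₀.2]⟩)⟩
  rw [← hx₁]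
  refine ((wStable_coxeterArrangement W).union hBW).chamberOf_eq_image_of_mem_ball hu hfu hH₀
    (hufix _ hpH₀) hball ht₁ball ht₂ball ?_
  rw [hfγ, hfγ]
  nlinarith [mul_pos (sub_pos.2 ht₁.2) (sub_pos.2 ht₂.1), mul_self_pos.2 hfxy]

lemma exists_chamberOf_eq_image_of_crossedBy_nonempty (hWfin : (W : Set (E ≃ₗᵢ[ℝ] E)).Finite)
    (hB : IsArrangement ℬ) (hBW : WStable W ℬ) {x y : E} (hx : x ∉ ⋃₀ coxeterArrangement W)
    (hy : y ∉ ⋃₀ coxeterArrangement W) (hxyB : Disjoint (segment ℝ x y) (⋃₀ ℬ))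
    (hgen : IsGenericSegment (coxeterArrangement W) x y)
    (hcross : (crossedBy (coxeterArrangement W) x y).Nonempty) :
    ∃ x' ∈ segment ℝ x y, x' ∉ ⋃₀ coxeterArrangement W ∧
      crossedBy (coxeterArrangement W) x' y ⊂ crossedBy (coxeterArrangement W) x y ∧
      ∃ u ∈ W, chamberOf (coxeterArrangement W ∪ ℬ) x' =
        ⇑u '' chamberOf (coxeterArrangement W ∪ ℬ) x := by
  obtain ⟨H, hHA, z, hz, hzH⟩ := hcross
  rw [segment_eq_image_lineMap] at hz
  obtain ⟨s, hs, rfl⟩ := hz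
  obtain ⟨t₀, ht₀, ⟨H₀, hH₀A, hpH₀⟩, hbefore⟩ :=
    exists_first_mem_of_isClosed (isArrangement_coxeterArrangement hWfin).isClosed_sUnion
      AffineMap.lineMap_continuous (by rwa [AffineMap.lineMap_apply_zero])
      (by rwa [AffineMap.lineMap_apply_one]) hs ⟨H, hHA, hzH⟩
  exact exists_chamberOf_eq_image_of_first_crossing hWfin hB hBW hxyB hgen ht₀ hH₀A hpH₀ hbefore

lemma exists_chamberOf_eq_image_of_isGenericSegment (hWfin : (W : Set (E ≃ₗᵢ[ℝ] E)).Finite)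
    (hB : IsArrangement ℬ) (hBW : WStable W ℬ) {x y : E} (hx : x ∉ ⋃₀ coxeterArrangement W)
    (hy : y ∉ ⋃₀ coxeterArrangement W) (hxyB : Disjoint (segment ℝ x y) (⋃₀ ℬ))
    (hgen : IsGenericSegment (coxeterArrangement W) x y) :
    ∃ w ∈ W, chamberOf (coxeterArrangement W ∪ ℬ) y =
      ⇑w '' chamberOf (coxeterArrangement W ∪ ℬ) x := by
  induction hn : (crossedBy (coxeterArrangement W) x y).ncard using Nat.strong_induction_on
    generalizing x with
  | _ n ih =>
  rcases (crossedBy (coxeterArrangement W) x y).eq_empty_or_nonempty with hempty | hcross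
  · refine ⟨1, one_mem W, ?_⟩
    rw [LinearIsometryEquiv.coe_one, image_id]
    refine chamberOf_eq_of_segment_subset fun v hv => ?_
    rw [mem_compl_iff, sUnion_union, mem_union, not_or]
    exact ⟨fun ⟨H, hH, hvH⟩ => eq_empty_iff_forall_notMem.1 hempty H ⟨hH, v, hv, hvH⟩,
      hxyB.notMem_of_mem_left hv⟩
  · obtain ⟨x', hx'seg, hx', hlt, u, hu, hx'u⟩ :=
      exists_chamberOf_eq_image_of_crossedBy_nonempty hWfin hB hBW hx hy hxyB hgen hcross
    have hsub : segment ℝ x' y ⊆ segment ℝ x y :=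
      (convex_segment x y).segment_subset hx'seg (right_mem_segment ℝ x y)
    have hfin : (crossedBy (coxeterArrangement W) x y).Finite :=
      (isArrangement_coxeterArrangement hWfin).1.subset fun H hH => hH.1
    obtain ⟨w, hw, hyw⟩ := ih _ (hn ▸ ncard_lt_ncard hlt hfin) hx' (hxyB.mono_left hsub)
      (hgen.mono hsub) rfl
    exact ⟨w * u, mul_mem hw hu, by rw [hyw, hx'u, image_image_eq_mul_image]⟩

lemma exists_eq_image_of_subset_mem_chambers (hWfin : (W : Set (E ≃ₗᵢ[ℝ] E)).Finite)
    (hB : IsArrangement ℬ) (hBW : WStable W ℬ) {b c c' : Set E} (hb : b ∈ chambers ℬ)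
    (hc : c ∈ chambers (coxeterArrangement W ∪ ℬ)) (hc' : c' ∈ chambers (coxeterArrangement W ∪ ℬ))
    (hcb : c ⊆ b) (hc'b : c' ⊆ b) : ∃ w ∈ W, c' = ⇑w '' c := by
  have hA := isArrangement_coxeterArrangement hWfin
  have hoff : ∀ d ∈ chambers (coxeterArrangement W ∪ ℬ), ∀ v ∈ d, v ∉ ⋃₀ coxeterArrangement W :=
    fun d hd v hv h => subset_compl_of_mem_chambers hd hv (sUnion_mono subset_union_left h)
  obtain ⟨x, hx⟩ := nonempty_of_mem_chambers hc
  obtain ⟨y, hy, hgen⟩ := exists_isGenericSegment hA.1 (fun H ⟨_, _, hr, hH⟩ => hH ▸ hr)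
    (hoff c hc x hx) ((hA.union hB).isOpen_of_mem_chambers hc') (nonempty_of_mem_chambers hc')
  have hxyB : Disjoint (segment ℝ x y) (⋃₀ ℬ) := disjoint_left.2 fun v hv =>
    subset_compl_of_mem_chambers hb ((hB.convex_of_mem_chambers hb).segment_subset (hcb hx)
      (hc'b hy) hv)
  rw [eq_chamberOf_of_mem hc hx, eq_chamberOf_of_mem hc' hy]
  exact exists_chamberOf_eq_image_of_isGenericSegment hWfin hB hBW (hoff c hc x hx)
    (hoff c' hc' y hy) hxyB hgen

end Walls

theorem orbit_bijection_general
    (W : Subgroup (E ≃ₗᵢ[ℝ] E)) (hWfin : (W : Set (E ≃ₗᵢ[ℝ] E)).Finite)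
    (ℬ : Set (Set E)) (hB : IsArrangement ℬ) (hBW : WStable W ℬ)
    (φB : Set E → Set E)
    (hφB : ∀ c ∈ chambers (coxeterArrangement W ∪ ℬ),
      φB c ∈ chambers ℬ ∧ c ⊆ φB c) :
    Set.BijOn (fun O => φB '' O)
      {O : Set (Set E) | ∃ c ∈ chambers (coxeterArrangement W ∪ ℬ),
        O = {c' : Set E | ∃ w ∈ W, c' = (⇑w) '' c}}
      {O : Set (Set E) | ∃ b ∈ chambers ℬ,
        O = {b' : Set E | ∃ w ∈ W, b' = (⇑w) '' b}} := by
  have h𝒞W := (wStable_coxeterArrangement W).union hBW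
  have hφB_eq : ∀ c ∈ chambers (coxeterArrangement W ∪ ℬ), ∀ b ∈ chambers ℬ, c ⊆ b → φB c = b :=
    fun c hc b hb hcb =>
      have ⟨z, hz⟩ := nonempty_of_mem_chambers hc
      eq_of_mem_chambers_of_mem (hφB c hc).1 hb ((hφB c hc).2 hz) (hcb hz)
  refine bijOn_image_imageOrbit (fun w hw c hc => h𝒞W.image_mem_chambers hw hc)
    (fun c hc => (hφB c hc).1) (fun c hc w hw => ?_) (fun b hb => ?_) (fun c hc c' hc' h => ?_)
  · exact hφB_eq _ (h𝒞W.image_mem_chambers hw hc) _ (hBW.image_mem_chambers hw (hφB c hc).1)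
      (image_mono (hφB c hc).2)
  · obtain ⟨c, hc, hcb⟩ :=
      exists_mem_chambers_union_subset (isArrangement_coxeterArrangement hWfin) hB hb
    exact ⟨c, hc, hφB_eq c hc b hb hcb⟩
  · exact exists_eq_image_of_subset_mem_chambers hWfin hB hBW (hφB c hc).1 hc hc' (hφB c hc).2
      (h ▸ (hφB c' hc').2)

/-- The map `φ_B : Ch(C) → Ch(B)` induces a bijection from the set of `W`-orbits of
`Ch(C)` onto the set of `W`-orbits of `Ch(B)` (an orbit is sent to its image under
`φ_B`, which is again an orbit). -/
theorem orbit_bijection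
    (W : Subgroup (E ≃ₗᵢ[ℝ] E)) (hWfin : (W : Set (E ≃ₗᵢ[ℝ] E)).Finite)
    (hW : IsReflectionGroup W)
    (ℬ : Set (Set E)) (hB : IsArrangement ℬ) (hBW : WStable W ℬ)
    (hdisj : coxeterArrangement W ∩ ℬ = ∅)
    (φB : Set E → Set E)
    (hφB : ∀ c ∈ chambers (coxeterArrangement W ∪ ℬ),
      φB c ∈ chambers ℬ ∧ c ⊆ φB c) :
    Set.BijOn (fun O => φB '' O)
      {O : Set (Set E) | ∃ c ∈ chambers (coxeterArrangement W ∪ ℬ),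
        O = {c' : Set E | ∃ w ∈ W, c' = (⇑w) '' c}}
      {O : Set (Set E) | ∃ b ∈ chambers ℬ,
        O = {b' : Set E | ∃ w ∈ W, b' = (⇑w) '' b}} :=
  orbit_bijection_general W hWfin ℬ hB hBW φB hφB
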